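/- arXiv:2604.28152 — 2 statements merged into one kernel-verified Lean document; each statement's English description precedes it below -/
import Mathlib

section
/- One-dimensional discrete composite Laplacian identity: for sequences h, u⁺, u⁻ : ℤ → ℝ, define ū = h ∘ u⁺ + (1 − h) ∘ u⁻ at cell centers, with centered second difference (L f)_i = (f_{i+1} − 2f_i + f_{i−1})/Δx². Then L ū = h ∘ L u⁺ + (1−h) ∘ L u⁻ + I_face→center(G h ∘ (G u⁺ − G u⁻)) + D(G h ∘ I_x(u⁺ − u⁻)), where G, D, I_x, I_face→center are as in the staggered-grid convention. -/
/-- One-dimensional discrete composite Laplacian identity on a staggered grid. -/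
theorem discrete_composite_laplacian
    (Δx : ℝ) (hΔx : 0 < Δx) (h up um : ℤ → ℝ)
    (G D Ix Ifc L : (ℤ → ℝ) → (ℤ → ℝ))
    (hG : ∀ f i, G f i = (f (i + 1) - f i) / Δx)
    (hD : ∀ w i, D w i = (w i - w (i - 1)) / Δx)
    (hIx : ∀ f i, Ix f i = (f (i + 1) + f i) / 2)
    (hIfc : ∀ w i, Ifc w i = (w i + w (i - 1)) / 2)
    (hL : ∀ f i, L f i = (f (i + 1) - 2 * f i + f (i - 1)) / Δx ^ 2)
    (ubar : ℤ → ℝ)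
    (hubar : ∀ i, ubar i = h i * up i + (1 - h i) * um i) :
    ∀ i : ℤ, L ubar i
      = h i * L up i + (1 - h i) * L um i
        + Ifc (fun j => G h j * (G up j - G um j)) i
        + D (fun j => G h j * Ix (fun k => up k - um k) j) i := by
  intro i
  have hne : Δx ≠ 0 := ne_of_gt hΔx
  simp only [hL, hD, hIfc, hG, hIx, hubar]
  have : i - 1 + 1 = i := by ring
  rw [this]
  field_simp
  ring
end

section
/- Normal-distance-weighted interpolation recovers the interface value to second order, discrete form: let d_l be a 3D tensor-product regularized DDF (satisfying zeroth and first discrete moment conditions) centered at a surface point X_l with unit normal n_l, let h : grid → ℝ be any grid function with values in [0,1], and suppose the grid functions u⁺, u⁻ are exactly affine: u^±(x) = u_Γ + c^±·(n_l·(x − X_l)) for constants u_Γ, c⁺, c⁻. Then for ū = h∘u⁺ + (1−h)∘u⁻, the weighted sums satisfy ΔxΔyΔz·Σ_{ijk} d_l(x_{ijk})·ū(x_{ijk}) − (c⁺ − c⁻)·ΔxΔyΔz·Σ_{ijk} d_l(x_{ijk})·(n_l·(x_{ijk} − X_l))·h(x_{ijk}) = u_Γ. -/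
lemma grid_support (Δ : ℝ) (hΔ : 0 < Δ) (δ : ℝ → ℝ) (R : ℝ)
    (hR : ∀ x : ℝ, R < |x| → δ x = 0) (X : ℝ) :
    ∃ s : Finset ℤ, ∀ i : ℤ, i ∉ s → δ ((i : ℝ) * Δ - X) = 0 := by
  refine ⟨Finset.Icc ⌈(X - R) / Δ⌉ ⌊(X + R) / Δ⌋, fun i hi => ?_⟩
  by_contra hne
  apply hi
  have h1 : ¬ (R < |(i : ℝ) * Δ - X|) := fun hlt => hne (hR _ hlt)
  push_neg at h1
  rw [abs_le] at h1
  rw [Finset.mem_Icc]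
  constructor
  · rw [Int.ceil_le, div_le_iff₀ hΔ]
    linarith [h1.1]
  · rw [Int.le_floor, le_div_iff₀ hΔ]
    linarith [h1.2]

lemma triple_factor (sx sy sz : Finset ℤ) (f g k : ℤ → ℝ) :
    ∑ p ∈ sx ×ˢ sy ×ˢ sz, f p.1 * g p.2.1 * k p.2.2
      = (∑ i ∈ sx, f i) * (∑ j ∈ sy, g j) * (∑ l ∈ sz, k l) := by
  rw [Finset.sum_product]
  have h1 : ∀ i : ℤ, (∑ q ∈ sy ×ˢ sz, f i * g q.1 * k q.2)
      = f i * ((∑ j ∈ sy, g j) * (∑ l ∈ sz, k l)) := by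
    intro i
    rw [Finset.sum_mul_sum, Finset.mul_sum, Finset.sum_product]
    refine Finset.sum_congr rfl fun j _ => ?_
    rw [Finset.mul_sum]
    exact Finset.sum_congr rfl fun l _ => by ring
  simp_rw [h1]
  rw [← Finset.sum_mul, mul_assoc]

/-- Normal-distance-weighted interpolation recovers the interface value exactly
for affine interior/exterior fields: with a tensor-product regularized DDF
satisfying the zeroth and first discrete moment conditions, any mask `h` with
values in `[0,1]`, and affine fields `u⁺, u⁻` sharing the interface value `uΓ`,
the corrected interpolation of the composite field `ū` equals `uΓ`. -/
theorem normal_distance_weighted_interpolation_exact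
    (Δx Δy Δz : ℝ) (hΔx : 0 < Δx) (hΔy : 0 < Δy) (hΔz : 0 < Δz)
    (δx δy δz : ℝ → ℝ)
    (hsuppx : ∃ R : ℝ, ∀ x : ℝ, R < |x| → δx x = 0)
    (hsuppy : ∃ R : ℝ, ∀ y : ℝ, R < |y| → δy y = 0)
    (hsuppz : ∃ R : ℝ, ∀ z : ℝ, R < |z| → δz z = 0)
    (hm0x : ∀ X : ℝ, (∑' i : ℤ, Δx * δx ((i : ℝ) * Δx - X)) = 1)
    (hm1x : ∀ X : ℝ, (∑' i : ℤ, Δx * ((i : ℝ) * Δx - X) * δx ((i : ℝ) * Δx - X)) = 0)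
    (hm0y : ∀ Y : ℝ, (∑' j : ℤ, Δy * δy ((j : ℝ) * Δy - Y)) = 1)
    (hm1y : ∀ Y : ℝ, (∑' j : ℤ, Δy * ((j : ℝ) * Δy - Y) * δy ((j : ℝ) * Δy - Y)) = 0)
    (hm0z : ∀ Z : ℝ, (∑' k : ℤ, Δz * δz ((k : ℝ) * Δz - Z)) = 1)
    (hm1z : ∀ Z : ℝ, (∑' k : ℤ, Δz * ((k : ℝ) * Δz - Z) * δz ((k : ℝ) * Δz - Z)) = 0)
    -- surface point, unit normal, interface value and normal slopes
    (X Y Z n₁ n₂ n₃ uΓ cplus cminus : ℝ)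
    (hn : n₁ ^ 2 + n₂ ^ 2 + n₃ ^ 2 = 1)
    -- the mask, the affine fields and the composite field on the grid
    (h uplus uminus ubar : ℤ × ℤ × ℤ → ℝ)
    (hh : ∀ p, 0 ≤ h p ∧ h p ≤ 1)
    (hup : ∀ p : ℤ × ℤ × ℤ, uplus p = uΓ + cplus *
      (n₁ * ((p.1 : ℝ) * Δx - X) + n₂ * ((p.2.1 : ℝ) * Δy - Y) +
        n₃ * ((p.2.2 : ℝ) * Δz - Z)))
    (hum : ∀ p : ℤ × ℤ × ℤ, uminus p = uΓ + cminus *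
      (n₁ * ((p.1 : ℝ) * Δx - X) + n₂ * ((p.2.1 : ℝ) * Δy - Y) +
        n₃ * ((p.2.2 : ℝ) * Δz - Z)))
    (hub : ∀ p, ubar p = h p * uplus p + (1 - h p) * uminus p)
    -- the kernel centered at the surface point, evaluated at grid points
    (d : ℤ × ℤ × ℤ → ℝ)
    (hd : ∀ p : ℤ × ℤ × ℤ, d p =
      δx ((p.1 : ℝ) * Δx - X) * δy ((p.2.1 : ℝ) * Δy - Y) *
        δz ((p.2.2 : ℝ) * Δz - Z)) :
    Δx * Δy * Δz * (∑' p : ℤ × ℤ × ℤ, d p * ubar p)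
      - (cplus - cminus) * (Δx * Δy * Δz *
        (∑' p : ℤ × ℤ × ℤ, d p *
          (n₁ * ((p.1 : ℝ) * Δx - X) + n₂ * ((p.2.1 : ℝ) * Δy - Y) +
            n₃ * ((p.2.2 : ℝ) * Δz - Z)) * h p)) = uΓ := by
  obtain ⟨Rx, hRx⟩ := hsuppx
  obtain ⟨Ry, hRy⟩ := hsuppy
  obtain ⟨Rz, hRz⟩ := hsuppz
  obtain ⟨sx, hsx⟩ := grid_support Δx hΔx δx Rx hRx X
  obtain ⟨sy, hsy⟩ := grid_support Δy hΔy δy Ry hRy Y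
  obtain ⟨sz, hsz⟩ := grid_support Δz hΔz δz Rz hRz Z
  set s : Finset (ℤ × ℤ × ℤ) := sx ×ˢ sy ×ˢ sz with hs
  -- the kernel vanishes off `s`
  have hd0 : ∀ p : ℤ × ℤ × ℤ, p ∉ s → d p = 0 := by
    intro p hp
    rw [hd]
    rw [hs, Finset.mem_product] at hp
    push_neg at hp
    by_cases h1 : p.1 ∈ sx
    · have h2 := hp h1
      rw [Finset.mem_product] at h2
      push_neg at h2
      by_cases h3 : p.2.1 ∈ sy
      · rw [hsz _ (h2 h3), mul_zero]
      · rw [hsy _ h3, mul_zero, zero_mul]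
    · rw [hsx _ h1, zero_mul, zero_mul]
  -- 1D moment identities as finite sums
  have hx0 : Δx * ∑ i ∈ sx, δx ((i : ℝ) * Δx - X) = 1 := by
    have := hm0x X
    rwa [tsum_eq_sum (s := sx) (fun i hi => by rw [hsx i hi, mul_zero]),
      ← Finset.mul_sum] at this
  have hy0 : Δy * ∑ j ∈ sy, δy ((j : ℝ) * Δy - Y) = 1 := by
    have := hm0y Y
    rwa [tsum_eq_sum (s := sy) (fun j hj => by rw [hsy j hj, mul_zero]),
      ← Finset.mul_sum] at this
  have hz0 : Δz * ∑ k ∈ sz, δz ((k : ℝ) * Δz - Z) = 1 := by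
    have := hm0z Z
    rwa [tsum_eq_sum (s := sz) (fun k hk => by rw [hsz k hk, mul_zero]),
      ← Finset.mul_sum] at this
  have hx1 : (∑ i ∈ sx, ((i : ℝ) * Δx - X) * δx ((i : ℝ) * Δx - X)) = 0 := by
    have := hm1x X
    rw [tsum_eq_sum (s := sx) (fun i hi => by rw [hsx i hi, mul_zero])] at this
    simp_rw [mul_assoc, ← Finset.mul_sum] at this
    exact (mul_eq_zero.1 this).resolve_left hΔx.ne'
  have hy1 : (∑ j ∈ sy, ((j : ℝ) * Δy - Y) * δy ((j : ℝ) * Δy - Y)) = 0 := by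
    have := hm1y Y
    rw [tsum_eq_sum (s := sy) (fun j hj => by rw [hsy j hj, mul_zero])] at this
    simp_rw [mul_assoc, ← Finset.mul_sum] at this
    exact (mul_eq_zero.1 this).resolve_left hΔy.ne'
  have hz1 : (∑ k ∈ sz, ((k : ℝ) * Δz - Z) * δz ((k : ℝ) * Δz - Z)) = 0 := by
    have := hm1z Z
    rw [tsum_eq_sum (s := sz) (fun k hk => by rw [hsz k hk, mul_zero])] at this
    simp_rw [mul_assoc, ← Finset.mul_sum] at this
    exact (mul_eq_zero.1 this).resolve_left hΔz.ne'
  -- replace the tsums by finite sums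
  rw [tsum_eq_sum (s := s) (f := fun p => d p * ubar p)
      (fun p hp => by simp [hd0 p hp]),
    tsum_eq_sum (s := s)
      (f := fun p => d p * (n₁ * ((p.1 : ℝ) * Δx - X) + n₂ * ((p.2.1 : ℝ) * Δy - Y) +
        n₃ * ((p.2.2 : ℝ) * Δz - Z)) * h p)
      (fun p hp => by simp [hd0 p hp])]
  -- expand the composite field pointwise
  have e1 : ∑ p ∈ s, d p * ubar p
      = uΓ * (∑ p ∈ s, d p)
        + cminus * (n₁ * (∑ p ∈ s, d p * ((p.1 : ℝ) * Δx - X))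
          + n₂ * (∑ p ∈ s, d p * ((p.2.1 : ℝ) * Δy - Y))
          + n₃ * (∑ p ∈ s, d p * ((p.2.2 : ℝ) * Δz - Z)))
        + (cplus - cminus) * (∑ p ∈ s, d p *
            (n₁ * ((p.1 : ℝ) * Δx - X) + n₂ * ((p.2.1 : ℝ) * Δy - Y) +
              n₃ * ((p.2.2 : ℝ) * Δz - Z)) * h p) := by
    have hpt : ∀ p ∈ s, d p * ubar p
        = uΓ * d p
          + cminus * (n₁ * (d p * ((p.1 : ℝ) * Δx - X))
            + n₂ * (d p * ((p.2.1 : ℝ) * Δy - Y))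
            + n₃ * (d p * ((p.2.2 : ℝ) * Δz - Z)))
          + (cplus - cminus) * (d p *
              (n₁ * ((p.1 : ℝ) * Δx - X) + n₂ * ((p.2.1 : ℝ) * Δy - Y) +
                n₃ * ((p.2.2 : ℝ) * Δz - Z)) * h p) := by
      intro p _
      rw [hub, hup, hum]
      ring
    rw [Finset.sum_congr rfl hpt]
    simp only [Finset.sum_add_distrib, ← Finset.mul_sum]
  rw [e1]
  -- factor the triple sums
  have f0 : (∑ p ∈ s, d p)
      = (∑ i ∈ sx, δx ((i : ℝ) * Δx - X)) * (∑ j ∈ sy, δy ((j : ℝ) * Δy - Y)) *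
        (∑ k ∈ sz, δz ((k : ℝ) * Δz - Z)) := by
    rw [← triple_factor]
    exact Finset.sum_congr rfl fun p _ => hd p
  have fξ : (∑ p ∈ s, d p * ((p.1 : ℝ) * Δx - X)) = 0 := by
    have : (∑ p ∈ s, d p * ((p.1 : ℝ) * Δx - X))
        = (∑ i ∈ sx, ((i : ℝ) * Δx - X) * δx ((i : ℝ) * Δx - X)) *
          (∑ j ∈ sy, δy ((j : ℝ) * Δy - Y)) * (∑ k ∈ sz, δz ((k : ℝ) * Δz - Z)) := by
      rw [← triple_factor]
      exact Finset.sum_congr rfl fun p _ => by rw [hd]; ring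
    rw [this, hx1, zero_mul, zero_mul]
  have fη : (∑ p ∈ s, d p * ((p.2.1 : ℝ) * Δy - Y)) = 0 := by
    have : (∑ p ∈ s, d p * ((p.2.1 : ℝ) * Δy - Y))
        = (∑ i ∈ sx, δx ((i : ℝ) * Δx - X)) *
          (∑ j ∈ sy, ((j : ℝ) * Δy - Y) * δy ((j : ℝ) * Δy - Y)) *
          (∑ k ∈ sz, δz ((k : ℝ) * Δz - Z)) := by
      rw [← triple_factor]
      exact Finset.sum_congr rfl fun p _ => by rw [hd]; ring
    rw [this, hy1, mul_zero, zero_mul]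
  have fζ : (∑ p ∈ s, d p * ((p.2.2 : ℝ) * Δz - Z)) = 0 := by
    have : (∑ p ∈ s, d p * ((p.2.2 : ℝ) * Δz - Z))
        = (∑ i ∈ sx, δx ((i : ℝ) * Δx - X)) * (∑ j ∈ sy, δy ((j : ℝ) * Δy - Y)) *
          (∑ k ∈ sz, ((k : ℝ) * Δz - Z) * δz ((k : ℝ) * Δz - Z)) := by
      rw [← triple_factor]
      exact Finset.sum_congr rfl fun p _ => by rw [hd]; ring
    rw [this, hz1, mul_zero]
  rw [f0, fξ, fη, fζ]
  linear_combination (uΓ * (Δy * ∑ j ∈ sy, δy ((j : ℝ) * Δy - Y)) *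
      (Δz * ∑ k ∈ sz, δz ((k : ℝ) * Δz - Z))) * hx0
    + (uΓ * (Δz * ∑ k ∈ sz, δz ((k : ℝ) * Δz - Z))) * hy0 + uΓ * hz0
end
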